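/- arXiv:nlin/0701054 — 4 statements merged into one kernel-verified Lean document; each statement's English description precedes it below -/
import Mathlib

section
/- Let λ₁,…,λ_N be distinct complex numbers with λ_i − λ_j ≠ 1 for all i ≠ j, and μ₁,…,μ_N nonzero complex numbers. Then the N×N matrix X with entries X_{ij} = μ_i μ_j / (1 + λ_j − λ_i) has determinant det(X) = ∏_{i=1}^N μ_i² · ∏_{1≤i<j≤N} (1 − 1/(1 − (λ_i − λ_j)²)), and in particular X is invertible. -/
/-!
Pivoting on the `(0, 0)` entry of the Cauchy matrix `(x i + y j)⁻¹`, the Schur complement is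
again a Cauchy matrix (in the remaining variables) with its rows and columns rescaled by
`(x i - x 0) / (x i + y 0)` and `(y j - y 0) / (x 0 + y j)`; induction gives Cauchy's determinant
formula. The theorem is the case `x = -λ`, `y = 1 + λ`, with rows and columns scaled by `μ`:
the diagonal factors `x i + y i` are `1`, and the pair `i < j` contributes
`-(λ i - λ j)² / (1 - (λ i - λ j)²)`.
-/

open Matrix Finset

namespace Matrix

variable {K : Type*} [Field K]

theorem det_succ_eq_mul_det_schur {n : ℕ} (A : Matrix (Fin (n + 1)) (Fin (n + 1)) K)
    (h : A 0 0 ≠ 0) :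
    A.det =
      A 0 0 * (of fun i j : Fin n => A i.succ j.succ - A i.succ 0 / A 0 0 * A 0 j.succ).det := by
  set B : Matrix (Fin (n + 1)) (Fin (n + 1)) K :=
    of fun i j => Fin.cases (A 0 j) (fun i' => A i'.succ j - A i'.succ 0 / A 0 0 * A 0 j) i
  have hAB : A.det = B.det := by
    refine det_eq_of_forall_row_eq_smul_add_const (Fin.cons 0 fun i => A i.succ 0 / A 0 0) 0
      rfl fun i j => ?_
    cases i using Fin.cases <;> simp [B]
  rw [hAB, det_succ_column_zero, Fin.sum_univ_succ]
  simp [B, h, submatrix]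

theorem det_of_mul_mul {R n : Type*} [CommRing R] [Fintype n] [DecidableEq n] (a b : n → R)
    (M : Matrix n n R) :
    (of fun i j => a i * (b j * M i j)).det = (∏ i, a i) * ((∏ j, b j) * M.det) := by
  rw [← det_mul_row, ← det_mul_column]
  rfl

def cauchy {m n : Type*} (x : m → K) (y : n → K) : Matrix m n K :=
  of fun i j => (x i + y j)⁻¹

theorem cauchy_schur_complement {n : ℕ} (x y : Fin (n + 1) → K) (hxy : ∀ i j, x i + y j ≠ 0)
    (i j : Fin n) :
    cauchy x y i.succ j.succ - cauchy x y i.succ 0 / cauchy x y 0 0 * cauchy x y 0 j.succ =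
      (x i.succ - x 0) / (x i.succ + y 0) * ((y j.succ - y 0) / (x 0 + y j.succ) *
        cauchy (x ∘ Fin.succ) (y ∘ Fin.succ) i j) := by
  have := hxy i.succ j.succ
  have := hxy i.succ 0
  have := hxy 0 j.succ
  have := hxy 0 0
  simp only [cauchy, of_apply, Function.comp_apply]
  field_simp
  ring

theorem det_cauchy {n : ℕ} (x y : Fin n → K) (hxy : ∀ i j, x i + y j ≠ 0) :
    (cauchy x y).det = (∏ i, (x i + y i)⁻¹) *
      ∏ i, ∏ j ∈ Ioi i, (x j - x i) * (y j - y i) / ((x i + y j) * (x j + y i)) := by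
  induction n with
  | zero => simp
  | succ n ih =>
    have h00 : cauchy x y 0 0 ≠ 0 := inv_ne_zero (hxy 0 0)
    rw [det_succ_eq_mul_det_schur _ h00]
    simp only [cauchy_schur_complement x y hxy, det_of_mul_mul,
      ih (x ∘ Fin.succ) (y ∘ Fin.succ) fun i j => hxy i.succ j.succ, Fin.prod_univ_succ,
      Fin.prod_Ioi_zero, Fin.prod_Ioi_succ, Function.comp_apply]
    have hcol : ∏ j : Fin n,
          (x j.succ - x 0) * (y j.succ - y 0) / ((x 0 + y j.succ) * (x j.succ + y 0)) =
        (∏ i : Fin n, (x i.succ - x 0) / (x i.succ + y 0)) *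
          ∏ j : Fin n, (y j.succ - y 0) / (x 0 + y j.succ) := by
      rw [← prod_mul_distrib]
      exact prod_congr rfl fun j _ => by rw [mul_comm (x 0 + _), mul_div_mul_comm]
    rw [hcol, cauchy, of_apply]
    ring

theorem det_cauchy_ne_zero {n : ℕ} {x y : Fin n → K} (hx : Function.Injective x)
    (hy : Function.Injective y) (hxy : ∀ i j, x i + y j ≠ 0) : (cauchy x y).det ≠ 0 := by
  rw [det_cauchy x y hxy]
  refine mul_ne_zero (prod_ne_zero_iff.2 fun i _ => inv_ne_zero (hxy i i))
    (prod_ne_zero_iff.2 fun i _ => prod_ne_zero_iff.2 fun j hj => ?_)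
  have hij : j ≠ i := (mem_Ioi.1 hj).ne'
  exact div_ne_zero (mul_ne_zero (sub_ne_zero.2 (hx.ne hij)) (sub_ne_zero.2 (hy.ne hij)))
    (mul_ne_zero (hxy i j) (hxy j i))

end Matrix

theorem shifted_cauchy_factor {K : Type*} [Field K] (a b : K) (hab : -a + (1 + b) ≠ 0)
    (hba : -b + (1 + a) ≠ 0) :
    (-b - -a) * (1 + b - (1 + a)) / ((-a + (1 + b)) * (-b + (1 + a))) =
      1 - 1 / (1 - (a - b) ^ 2) := by
  have hden : (-a + (1 + b)) * (-b + (1 + a)) = 1 - (a - b) ^ 2 := by ring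
  have hne : 1 - (a - b) ^ 2 ≠ 0 := hden ▸ mul_ne_zero hab hba
  rw [hden]
  field_simp
  ring

theorem cauchy_det_trig {N : ℕ} (l m : Fin N → ℂ)
    (hl : Function.Injective l)
    (hl1 : ∀ i j, i ≠ j → l i - l j ≠ 1)
    (hm : ∀ i, m i ≠ 0)
    (X : Matrix (Fin N) (Fin N) ℂ)
    (hX : ∀ i j, X i j = m i * m j / (1 + l j - l i)) :
    X.det = (∏ i, (m i) ^ 2) *
      ∏ p ∈ Finset.univ.filter (fun p : Fin N × Fin N => p.1 < p.2),
        (1 - 1 / (1 - (l p.1 - l p.2) ^ 2)) ∧ IsUnit X.det := by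
  set x : Fin N → ℂ := fun i => -l i
  set y : Fin N → ℂ := fun j => 1 + l j
  have hxy : ∀ i j, x i + y j ≠ 0 := by
    intro i j
    rcases eq_or_ne i j with rfl | hij
    · simp [x, y]
    · exact fun h => hl1 i j hij (by linear_combination -h)
  have hdet : X.det = (∏ i, m i ^ 2) * (cauchy x y).det := by
    have hX' : X = of fun i j => m i * (m j * cauchy x y i j) := by
      ext i j
      simp only [hX, cauchy, of_apply]
      ring
    rw [hX', det_of_mul_mul, prod_pow]
    ring
  refine ⟨?_, ?_⟩
  · rw [hdet, det_cauchy x y hxy, prod_finset_product' _ univ Ioi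
      (f := fun i j => 1 - 1 / (1 - (l i - l j) ^ 2)) (by simp)]
    have hdiag : ∏ i, (x i + y i)⁻¹ = 1 := prod_eq_one fun i _ => by simp [x, y]
    rw [hdiag, one_mul]
    congr 1
    exact prod_congr rfl fun i _ => prod_congr rfl fun j _ =>
      shifted_cauchy_factor (l i) (l j) (hxy i j) (hxy j i)
  · rw [hdet, isUnit_iff_ne_zero]
    exact mul_ne_zero (prod_ne_zero_iff.2 fun i _ => pow_ne_zero 2 (hm i))
      (det_cauchy_ne_zero (neg_injective.comp hl) ((add_right_injective 1).comp hl) hxy)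
end

section
/- Let X, Z ∈ gl(N, ℂ) with rank([X, Z] + I) = 1 and det(I + Z) ≠ 0. Define X' = I + Zᵗ and Z' = Xᵗ(I + Zᵗ). Then X' is invertible and rank(X' Z' X'⁻¹ − Z' + I) = 1. -/
open Matrix

theorem bC_maps_CM_to_trig {N : ℕ} (X Z : Matrix (Fin N) (Fin N) ℂ)
    (hrank : (X * Z - Z * X + 1).rank = 1)
    (hZ : (1 + Z).det ≠ 0) :
    IsUnit (1 + Zᵀ).det ∧
      ((1 + Zᵀ) * (Xᵀ * (1 + Zᵀ)) * (1 + Zᵀ)⁻¹ - Xᵀ * (1 + Zᵀ) + 1).rank = 1 := by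
  have hdet : (1 + Zᵀ).det ≠ 0 := by
    have h : (1 + Zᵀ) = (1 + Z)ᵀ := by simp [transpose_add]
    rw [h, det_transpose]; exact hZ
  have hU : IsUnit (1 + Zᵀ).det := isUnit_iff_ne_zero.mpr hdet
  refine ⟨hU, ?_⟩
  have hmul : (1 + Zᵀ) * (1 + Zᵀ)⁻¹ = 1 := mul_nonsing_inv _ hU
  have key : (1 + Zᵀ) * (Xᵀ * (1 + Zᵀ)) * (1 + Zᵀ)⁻¹ - Xᵀ * (1 + Zᵀ) + 1
      = (X * Z - Z * X + 1)ᵀ := by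
    have h2 : (1 + Zᵀ) * (Xᵀ * (1 + Zᵀ)) * (1 + Zᵀ)⁻¹ = (1 + Zᵀ) * Xᵀ := by
      rw [← mul_assoc (1 + Zᵀ) Xᵀ (1 + Zᵀ), mul_assoc, hmul, mul_one]
    rw [h2]
    simp only [transpose_add, transpose_sub, transpose_mul, transpose_one]
    noncomm_ring
  rw [key, rank_transpose, hrank]
end

section
/- Let X, Z, X̃, Z̃ be N×N complex matrices with X̃ and Z̃ invertible, μ ∈ ℂᴺ a column vector, and suppose [X, Z] = μ μᵗ − X and [X̃, Z̃] = [X, Z]. Then 1 − μᵗ Z̃⁻¹ X̃⁻¹ μ = det(I − X X̃⁻¹ Z̃⁻¹). -/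
open Matrix

theorem reduced_BA_det_formula {N : ℕ}
    (X Z X' Z' : Matrix (Fin N) (Fin N) ℂ) (m : Fin N → ℂ)
    (hX' : IsUnit X'.det) (hZ' : IsUnit Z'.det)
    (hcomm : X * Z - Z * X = vecMulVec m m - X)
    (hcomm' : X' * Z' - Z' * X' = X * Z - Z * X) :
    1 - m ⬝ᵥ ((Z'⁻¹ * X'⁻¹) *ᵥ m) = (1 - X * X'⁻¹ * Z'⁻¹).det := by
  have hXi : X' * X'⁻¹ = 1 := mul_nonsing_inv _ hX'
  have hXi' : X'⁻¹ * X' = 1 := nonsing_inv_mul _ hX'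
  have hZi : Z' * Z'⁻¹ = 1 := mul_nonsing_inv _ hZ'
  have hZi' : Z'⁻¹ * Z' = 1 := nonsing_inv_mul _ hZ'
  have hm : vecMulVec m m = X' * Z' - Z' * X' + X := by
    rw [hcomm', hcomm]; abel
  have key1 : (1 : Matrix (Fin N) (Fin N) ℂ) - (X'⁻¹ * replicateCol Unit m) * (replicateRow Unit m * Z'⁻¹)
      = X'⁻¹ * (Z' * X' - X) * Z'⁻¹ := by
    have h1 : (X'⁻¹ * replicateCol Unit m) * (replicateRow Unit m * Z'⁻¹)
        = X'⁻¹ * (vecMulVec m m) * Z'⁻¹ := by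
      rw [vecMulVec_eq Unit, Matrix.mul_assoc, Matrix.mul_assoc, Matrix.mul_assoc]
    rw [h1, hm]
    have expand : X'⁻¹ * (X' * Z' - Z' * X' + X) * Z'⁻¹
        = X'⁻¹ * X' * Z' * Z'⁻¹ - X'⁻¹ * (Z' * X' - X) * Z'⁻¹ := by noncomm_ring
    rw [expand, hXi', Matrix.one_mul, hZi, sub_sub_cancel]
  have key2 : (1 : Matrix (Fin N) (Fin N) ℂ) - X * X'⁻¹ * Z'⁻¹
      = (Z' * X' - X) * X'⁻¹ * Z'⁻¹ := by
    have h2 : (Z' * X' - X) * X'⁻¹ * Z'⁻¹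
        = Z' * (X' * X'⁻¹) * Z'⁻¹ - X * X'⁻¹ * Z'⁻¹ := by noncomm_ring
    rw [h2, hXi, Matrix.mul_one, hZi]
  have hdet : ((1 : Matrix (Fin N) (Fin N) ℂ)
      - (X'⁻¹ * replicateCol Unit m) * (replicateRow Unit m * Z'⁻¹)).det
      = ((1 : Matrix (Fin N) (Fin N) ℂ) - X * X'⁻¹ * Z'⁻¹).det := by
    rw [key1, key2, det_mul, det_mul, det_mul, det_mul]
    ring
  rw [← hdet, det_one_sub_mul_comm, det_unique, Matrix.sub_apply, Matrix.one_apply_eq]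
  congr 1
  have h3 : replicateRow Unit m * Z'⁻¹ * (X'⁻¹ * replicateCol Unit m)
      = replicateRow Unit (m ᵥ* Z'⁻¹) * replicateCol Unit (X'⁻¹ *ᵥ m) := by
    rw [replicateRow_vecMul, replicateCol_mulVec, Matrix.mul_assoc]
  rw [h3, replicateRow_mul_replicateCol_apply, ← dotProduct_mulVec, mulVec_mulVec]
end

section
/- Let (X, Z) be N×N complex matrices with X invertible and diagonalizable, satisfying rank(X Z X⁻¹ − Z + I) = 1. Then there exist x₁,…,x_N, y₁,…,y_N ∈ ℂ with e^{x_i} ≠ e^{x_j} for i ≠ j, and an invertible matrix U, such that U⁻¹ X U = diag(e^{x₁},…,e^{x_N}) and (U⁻¹ Z U)_{ij} = y_i δ_{ij} + (1 − δ_{ij}) / (2 sinh((x_i − x_j)/2)). -/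
open Matrix Complex

lemma rank_one_decomp {N : ℕ} (M : Matrix (Fin N) (Fin N) ℂ) (h : M.rank = 1) :
    ∃ a b : Fin N → ℂ, ∀ i j, M i j = a i * b j := by
  rw [Matrix.rank] at h
  obtain ⟨v, hv0, hv⟩ := finrank_eq_one_iff'.mp h
  have hcol : ∀ j, ∃ c : ℂ, ∀ i, M i j = c * (v : Fin N → ℂ) i := by
    intro j
    have hmem : M *ᵥ Pi.single j 1 ∈ LinearMap.range M.mulVecLin := ⟨Pi.single j 1, rfl⟩
    obtain ⟨c, hc⟩ := hv ⟨_, hmem⟩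
    refine ⟨c, fun i => ?_⟩
    have h2 : c • (v : Fin N → ℂ) = M *ᵥ Pi.single j 1 := congrArg Subtype.val hc
    have h3 := congrFun h2 i
    simpa using h3.symm
  choose c hc using hcol
  exact ⟨fun i => (v : Fin N → ℂ) i, c, fun i j => by rw [hc j i]; ring⟩

theorem lemma1_ruijsenaars {N : ℕ} (X Z : Matrix (Fin N) (Fin N) ℂ)
    (hX : IsUnit X.det)
    (hdiag : ∃ (P : Matrix (Fin N) (Fin N) ℂ) (d : Fin N → ℂ),
      IsUnit P.det ∧ X = P * Matrix.diagonal d * P⁻¹)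
    (hrank : (X * Z * X⁻¹ - Z + 1).rank = 1) :
    ∃ (x y : Fin N → ℂ) (U : Matrix (Fin N) (Fin N) ℂ),
      IsUnit U.det ∧
      (∀ i j, i ≠ j → exp (x i) ≠ exp (x j)) ∧
      U⁻¹ * X * U = Matrix.diagonal (fun i => exp (x i)) ∧
      (∀ i j, (U⁻¹ * Z * U) i j =
        if i = j then y i else 1 / (2 * Complex.sinh ((x i - x j) / 2))) := by
  obtain ⟨P, d, hP, hXeq⟩ := hdiag
  have hPinv : IsUnit P⁻¹.det := (Matrix.isUnit_nonsing_inv_det P hP)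
  have hPinvP : P⁻¹ * P = 1 := Matrix.nonsing_inv_mul P hP
  have hPPinv : P * P⁻¹ = 1 := Matrix.mul_nonsing_inv P hP
  -- d i ≠ 0
  have hdet : IsUnit (Matrix.diagonal d).det := by
    have : X.det = (Matrix.diagonal d).det := by
      rw [hXeq, Matrix.det_mul, Matrix.det_mul, mul_comm P.det, mul_assoc,
        ← Matrix.det_mul, hPPinv, Matrix.det_one, mul_one]
    rwa [this] at hX
  have hd0 : ∀ i, d i ≠ 0 := by
    intro i hi
    rw [Matrix.det_diagonal] at hdet
    exact hdet.ne_zero (Finset.prod_eq_zero (Finset.mem_univ i) hi)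
  have hDinv : (Matrix.diagonal d)⁻¹ = Matrix.diagonal (fun i => (d i)⁻¹) :=
    Matrix.inv_eq_right_inv (by
      rw [Matrix.diagonal_mul_diagonal]
      have hfun : (fun i => d i * (d i)⁻¹) = fun _ => (1 : ℂ) :=
        funext fun i => mul_inv_cancel₀ (hd0 i)
      rw [hfun, Matrix.diagonal_one])
  have hXinv : X⁻¹ = P * (Matrix.diagonal (fun i => (d i)⁻¹)) * P⁻¹ := by
    rw [hXeq, Matrix.mul_inv_rev, Matrix.mul_inv_rev, Matrix.nonsing_inv_nonsing_inv P hP,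
      hDinv, Matrix.mul_assoc]
  set W : Matrix (Fin N) (Fin N) ℂ := P⁻¹ * Z * P with hW
  -- the conjugated rank-one matrix
  have hA : P⁻¹ * (X * Z * X⁻¹ - Z + 1) * P
      = Matrix.diagonal d * W * Matrix.diagonal (fun i => (d i)⁻¹) - W + 1 := by
    rw [hXinv, hXeq, hW]
    simp only [Matrix.mul_sub, Matrix.sub_mul, Matrix.mul_add, Matrix.add_mul,
      Matrix.mul_one, Matrix.one_mul, Matrix.mul_assoc, hPinvP]
    rw [Matrix.nonsing_inv_mul_cancel_left P _ hP]
  have hArank : (P⁻¹ * (X * Z * X⁻¹ - Z + 1) * P).rank = 1 := by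
    rw [Matrix.rank_mul_eq_left_of_isUnit_det P _ hP,
      Matrix.rank_mul_eq_right_of_isUnit_det P⁻¹ _ hPinv]
    exact hrank
  rw [hA] at hArank
  obtain ⟨a, b, hab⟩ := rank_one_decomp _ hArank
  have hentry : ∀ i j, (d i * (d j)⁻¹ - 1) * W i j + (if i = j then 1 else 0) = a i * b j := by
    intro i j
    have h1 := hab i j
    simp only [Matrix.sub_apply, Matrix.add_apply, Matrix.one_apply] at h1
    rw [← h1]
    rw [Matrix.mul_diagonal, Matrix.diagonal_mul]
    ring
  have habi : ∀ i, a i * b i = 1 := by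
    intro i
    have h1 := hentry i i
    rw [mul_inv_cancel₀ (hd0 i)] at h1
    simpa using h1.symm
  have ha0 : ∀ i, a i ≠ 0 := fun i hi => by simpa [hi] using habi i
  have hb0 : ∀ i, b i ≠ 0 := fun i hi => by simpa [hi] using habi i
  have hdne : ∀ i j, i ≠ j → d i ≠ d j := by
    intro i j hij hd
    have h1 := hentry i j
    rw [hd, mul_inv_cancel₀ (hd0 j), if_neg hij] at h1
    simp only [sub_self, zero_mul, add_zero] at h1
    exact mul_ne_zero (ha0 i) (hb0 j) h1.symm
  have hWoff : ∀ i j, i ≠ j → W i j = a i * b j * d j / (d i - d j) := by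
    intro i j hij
    have h1 := hentry i j
    rw [if_neg hij, add_zero] at h1
    have h2 : (d i - d j) ≠ 0 := sub_ne_zero.mpr (hdne i j hij)
    rw [eq_div_iff h2]
    have key : (d i * (d j)⁻¹ - 1) * W i j * d j = W i j * (d i - d j) := by
      have h3 : (d j)⁻¹ * d j = 1 := inv_mul_cancel₀ (hd0 j)
      linear_combination (W i j * d i) * h3
    linear_combination d j * h1 - key
  -- choose logarithms
  set x : Fin N → ℂ := fun i => Complex.log (d i) with hx
  have hexp : ∀ i, exp (x i) = d i := fun i => Complex.exp_log (hd0 i)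
  set t : Fin N → ℂ := fun i => (b i * exp (x i / 2))⁻¹ with ht
  have ht0 : ∀ i, t i ≠ 0 := fun i =>
    inv_ne_zero (mul_ne_zero (hb0 i) (Complex.exp_ne_zero _))
  set U : Matrix (Fin N) (Fin N) ℂ := P * Matrix.diagonal t with hU
  have htdet : IsUnit (Matrix.diagonal t).det := by
    rw [Matrix.det_diagonal]
    exact isUnit_iff_ne_zero.mpr (Finset.prod_ne_zero_iff.mpr fun i _ => ht0 i)
  have hUdet : IsUnit U.det := by
    rw [hU, Matrix.det_mul]
    exact hP.mul htdet
  have htinv : (Matrix.diagonal t)⁻¹ = Matrix.diagonal (fun i => (t i)⁻¹) :=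
    Matrix.inv_eq_right_inv (by
      rw [Matrix.diagonal_mul_diagonal]
      have hfun : (fun i => t i * (t i)⁻¹) = fun _ => (1 : ℂ) :=
        funext fun i => mul_inv_cancel₀ (ht0 i)
      rw [hfun, Matrix.diagonal_one])
  have hUinv : U⁻¹ = Matrix.diagonal (fun i => (t i)⁻¹) * P⁻¹ := by
    rw [hU, Matrix.mul_inv_rev, htinv]
  refine ⟨x, fun i => W i i, U, hUdet, ?_, ?_, ?_⟩
  · intro i j hij
    rw [hexp, hexp]
    exact hdne i j hij
  · have hde : Matrix.diagonal (fun i => exp (x i)) = Matrix.diagonal d := by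
      have hfun : (fun i => exp (x i)) = d := funext hexp
      rw [hfun]
    rw [hUinv, hU, hXeq, hde]
    simp only [Matrix.mul_assoc]
    rw [Matrix.nonsing_inv_mul_cancel_left P _ hP,
      Matrix.nonsing_inv_mul_cancel_left P _ hP]
    ext i j
    rw [Matrix.diagonal_mul, Matrix.mul_diagonal]
    by_cases hij : i = j
    · subst hij
      simp only [Matrix.diagonal_apply_eq]
      rw [mul_comm (d i) (t i), ← mul_assoc, inv_mul_cancel₀ (ht0 i), one_mul]
    · simp only [Matrix.diagonal_apply_ne _ hij]
      ring
  · intro i j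
    have hZ : U⁻¹ * Z * U = Matrix.diagonal (fun i => (t i)⁻¹) * W * Matrix.diagonal t := by
      rw [hUinv, hU, hW]
      simp only [Matrix.mul_assoc]
    rw [hZ, Matrix.mul_diagonal, Matrix.diagonal_mul]
    by_cases hij : i = j
    · subst hij
      rw [if_pos rfl, mul_comm ((t i)⁻¹) (W i i), mul_assoc,
        inv_mul_cancel₀ (ht0 i), mul_one]
    · rw [if_neg hij, hWoff i j hij]
      have hdij : d i - d j ≠ 0 := sub_ne_zero.mpr (hdne i j hij)
      have hsinh : 2 * Complex.sinh ((x i - x j) / 2)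
          = (d i - d j) / (exp (x i / 2) * exp (x j / 2)) := by
        rw [eq_div_iff (mul_ne_zero (Complex.exp_ne_zero _)
          (Complex.exp_ne_zero _)), ← hexp i, ← hexp j, Complex.two_sinh]
        have e1 : exp ((x i - x j) / 2) * (exp (x i / 2) * exp (x j / 2)) = exp (x i) := by
          rw [← Complex.exp_add, ← Complex.exp_add]
          congr 1
          ring
        have e2 : exp (-((x i - x j) / 2)) * (exp (x i / 2) * exp (x j / 2)) = exp (x j) := by
          rw [← Complex.exp_add, ← Complex.exp_add]
          congr 1
          ring
        calc (exp ((x i - x j) / 2) - exp (-((x i - x j) / 2)))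
              * (exp (x i / 2) * exp (x j / 2))
            = exp ((x i - x j) / 2) * (exp (x i / 2) * exp (x j / 2))
              - exp (-((x i - x j) / 2)) * (exp (x i / 2) * exp (x j / 2)) := by ring
          _ = exp (x i) - exp (x j) := by rw [e1, e2]
      rw [hsinh]
      have hai : a i = (b i)⁻¹ := by
        have h6 := hb0 i
        field_simp
        linear_combination habi i
      have hdj : d j = exp (x j / 2) * exp (x j / 2) := by
        rw [← Complex.exp_add, ← hexp j]
        congr 1
        ring
      have hdij' : d i - exp (x j / 2) * exp (x j / 2) ≠ 0 := by
        rw [← hdj]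
        exact hdij
      rw [ht]
      simp only
      rw [hai, hdj]
      have hbi := hb0 i
      have hbj := hb0 j
      have hei := Complex.exp_ne_zero (x i / 2)
      have hej := Complex.exp_ne_zero (x j / 2)
      field_simp
end
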